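/- arXiv:1709.04773 — 4 statements merged into one kernel-verified Lean document; each statement's English description precedes it below -/
import Mathlib

section
/- Let G be a connected graph of diameter 2 and let e = uw be an edge of G. Then B'(e) = 2 + 2·Σ_{v ∈ N(w), v ∉ N(u), v ≠ u} 1/|N(u) ∩ N(v)| + 2·Σ_{v ∈ N(u), v ∉ N(w), v ≠ w} 1/|N(w) ∩ N(v)|. -/
/-!
In a connected graph of diameter at most 2, every shortest path has at most two edges, so a
shortest `x`-`y` path through `e = uw` must start or end at `u` or `w`. Hence only pairs with an
endpoint in `{u, w}` contribute, and by symmetry `B'(e)` is twice the sum of the contributions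
of pairs starting at `u` or at `w`, minus those of `(u, w)` and `(w, u)`. From `u`, the pair
`(u, w)` contributes `1`, and a vertex `v` at distance 2 contributes
`[w ~ v] / |N(u) ∩ N(v)|`, since the shortest `u`-`v` paths are indexed by the common
neighbours and exactly one of them, `u w v`, uses `e`.
-/

open SimpleGraph Finset

/-- The number of shortest paths between `x` and `y` in `G`. -/
noncomputable def numShortestPaths {V : Type*} (G : SimpleGraph V) (x y : V) : ℕ :=
  Nat.card {p : G.Walk x y // p.length = G.dist x y}

/-- The number of shortest paths between `x` and `y` in `G` that contain the edge `e`. -/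
noncomputable def numShortestPathsThru {V : Type*} (G : SimpleGraph V) (x y : V)
    (e : Sym2 V) : ℕ :=
  Nat.card {p : G.Walk x y // p.length = G.dist x y ∧ e ∈ p.edges}

open Classical in
/-- The edge betweenness centrality of `e`: the sum over ordered pairs of distinct
vertices `(x, y)` of the fraction of shortest `x`-`y` paths containing `e`. -/
noncomputable def edgeBetweenness {V : Type*} [Fintype V] (G : SimpleGraph V)
    (e : Sym2 V) : ℚ :=
  ∑ x : V, ∑ y : V, if x = y then 0 else
    (numShortestPathsThru G x y e : ℚ) / (numShortestPaths G x y)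

namespace Finset

theorem sum_sum_eq_two_nsmul_sub_of_symm {α R : Type*} [Fintype α] [DecidableEq α]
    [AddCommGroup R] {f : α → α → R} (s : Finset α) (hsymm : ∀ x y, f x y = f y x)
    (hsupp : ∀ x ∉ s, ∀ y ∉ s, f x y = 0) :
    ∑ x, ∑ y, f x y = 2 • ∑ x ∈ s, ∑ y, f x y - ∑ x ∈ s, ∑ y ∈ s, f x y := by
  have hcompl : ∑ x ∈ sᶜ, ∑ y, f x y = ∑ y ∈ s, ∑ x ∈ sᶜ, f x y :=
    calc ∑ x ∈ sᶜ, ∑ y, f x y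
      _ = ∑ x ∈ sᶜ, ∑ y ∈ s, f x y := sum_congr rfl fun x hx => by
          rw [← sum_add_sum_compl s, sum_eq_zero fun y hy =>
            hsupp x (mem_compl.1 hx) y (mem_compl.1 hy), add_zero]
      _ = ∑ y ∈ s, ∑ x ∈ sᶜ, f x y := sum_comm
  have hrow : ∀ y, ∑ x ∈ sᶜ, f x y = ∑ x, f y x - ∑ x ∈ s, f y x := fun y => by
    rw [eq_sub_iff_add_eq', ← sum_add_sum_compl s (f y)]
    simp only [hsymm y]
  rw [← sum_add_sum_compl s, hcompl, sum_congr rfl fun y _ => hrow y, sum_sub_distrib, two_nsmul]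
  abel

end Finset

namespace SimpleGraph

variable {V : Type*} {G : SimpleGraph V} {x y w : V}

namespace Walk

theorem eq_toWalk_of_length_eq_one (h : G.Adj x y) {p : G.Walk x y} (hp : p.length = 1) :
    p = h.toWalk := by
  cases p with
  | nil => simp at hp
  | cons h q => cases q with
    | nil => rfl
    | cons _ _ => simp at hp

theorem mem_or_mem_of_mem_edges_of_length_le_two {p : G.Walk x y} (hp : p.length ≤ 2)
    {e : Sym2 V} (he : e ∈ p.edges) : x ∈ e ∨ y ∈ e := by
  rcases p with _ | ⟨_, _ | ⟨_, _ | ⟨_, q⟩⟩⟩ <;> aesop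

theorem mk_mem_edges_iff_snd_eq_of_length_eq_two {p : G.Walk x y} (hp : p.length = 2) :
    s(x, w) ∈ p.edges ↔ p.snd = w := by
  rcases p with _ | ⟨h₁, _ | ⟨h₂, _ | ⟨_, q⟩⟩⟩ <;> simp at hp ⊢
  grind [h₁.ne]

end Walk

theorem card_walk_length_eq_two_snd_eq (hxw : G.Adj x w) [Decidable (G.Adj w y)] :
    Nat.card {p : G.Walk x y // p.length = 2 ∧ p.snd = w} = if G.Adj w y then 1 else 0 := by
  split_ifs with hwy
  · rw [Nat.card_eq_one_iff_exists]
    refine ⟨⟨.cons hxw hwy.toWalk, rfl, rfl⟩, fun ⟨p, hp, hpw⟩ => Subtype.ext ?_⟩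
    simpa using congrArg Subtype.val <| (G.walkLengthTwoEquivCommonNeighbors x y).injective
      (a₁ := ⟨p, hp⟩) (a₂ := ⟨.cons hxw hwy.toWalk, rfl⟩) (Subtype.ext hpw)
  · rw [Nat.card_eq_zero]
    refine .inl ⟨fun ⟨p, hp, hpw⟩ => hwy ?_⟩
    have hsnd : p.snd ∈ G.commonNeighbors x y :=
      (G.walkLengthTwoEquivCommonNeighbors x y ⟨p, hp⟩).2
    exact hpw ▸ hsnd.2.symm

theorem numShortestPaths_comm (x y : V) : numShortestPaths G x y = numShortestPaths G y x :=
  Nat.card_congr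
    ⟨fun p => ⟨p.1.reverse, by simp [p.2, dist_comm]⟩,
     fun p => ⟨p.1.reverse, by simp [p.2, dist_comm]⟩,
     fun p => by simp, fun p => by simp⟩

theorem numShortestPathsThru_comm (x y : V) (e : Sym2 V) :
    numShortestPathsThru G x y e = numShortestPathsThru G y x e :=
  Nat.card_congr
    ⟨fun p => ⟨p.1.reverse, by simp [p.2.1, p.2.2, dist_comm]⟩,
     fun p => ⟨p.1.reverse, by simp [p.2.1, p.2.2, dist_comm]⟩,
     fun p => by simp, fun p => by simp⟩

theorem numShortestPaths_of_adj (h : G.Adj x y) : numShortestPaths G x y = 1 := by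
  rw [numShortestPaths, dist_eq_one_iff_adj.2 h, Nat.card_eq_one_iff_exists]
  exact ⟨⟨h.toWalk, rfl⟩, fun p => Subtype.ext (Walk.eq_toWalk_of_length_eq_one h p.2)⟩

theorem numShortestPathsThru_of_adj [DecidableEq V] (h : G.Adj x y) (e : Sym2 V) :
    numShortestPathsThru G x y e = if e = s(x, y) then 1 else 0 := by
  rw [numShortestPathsThru, dist_eq_one_iff_adj.2 h]
  split_ifs with he
  · rw [Nat.card_eq_one_iff_exists]
    exact ⟨⟨h.toWalk, rfl, by simp [he]⟩,
      fun p => Subtype.ext (Walk.eq_toWalk_of_length_eq_one h p.2.1)⟩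
  · rw [Nat.card_eq_zero]
    refine .inl ⟨fun ⟨p, hp, hep⟩ => he ?_⟩
    simpa [Walk.eq_toWalk_of_length_eq_one h hp] using hep

theorem numShortestPaths_of_dist_eq_two [Fintype V] [DecidableEq V] [DecidableRel G.Adj]
    (hd : G.dist x y = 2) :
    numShortestPaths G x y = #(G.neighborFinset x ∩ G.neighborFinset y) := by
  rw [numShortestPaths, hd, Nat.card_congr (G.walkLengthTwoEquivCommonNeighbors x y),
    Nat.card_coe_set_eq, ← Set.ncard_coe_finset]
  congr
  ext
  simp [mem_commonNeighbors]

theorem numShortestPathsThru_of_dist_eq_two (hxw : G.Adj x w) (hd : G.dist x y = 2)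
    [Decidable (G.Adj w y)] :
    numShortestPathsThru G x y s(x, w) = if G.Adj w y then 1 else 0 := by
  simp only [numShortestPathsThru, hd, ← card_walk_length_eq_two_snd_eq hxw]
  exact Nat.card_congr <| .subtypeEquivRight fun p =>
    and_congr_right fun hp => Walk.mk_mem_edges_iff_snd_eq_of_length_eq_two hp

open Classical in
noncomputable def pairDependency (G : SimpleGraph V) (e : Sym2 V) (x y : V) : ℚ :=
  if x = y then 0 else (numShortestPathsThru G x y e : ℚ) / numShortestPaths G x y

theorem edgeBetweenness_eq_sum_pairDependency [Fintype V] (e : Sym2 V) :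
    edgeBetweenness G e = ∑ x, ∑ y, pairDependency G e x y :=
  rfl

theorem pairDependency_comm (e : Sym2 V) (x y : V) :
    pairDependency G e x y = pairDependency G e y x := by
  rw [pairDependency, pairDependency, numShortestPathsThru_comm x y, numShortestPaths_comm x y]
  by_cases h : x = y <;> simp [h, Ne.symm]

@[simp]
theorem pairDependency_self (e : Sym2 V) (x : V) : pairDependency G e x x = 0 := by
  simp [pairDependency]

theorem pairDependency_of_adj [DecidableEq V] (h : G.Adj x y) (e : Sym2 V) :
    pairDependency G e x y = if e = s(x, y) then 1 else 0 := by
  rw [pairDependency, if_neg h.ne, numShortestPathsThru_of_adj h, numShortestPaths_of_adj h]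
  split_ifs <;> simp

theorem pairDependency_mk_of_dist_eq_two [Fintype V] [DecidableEq V] [DecidableRel G.Adj]
    (hxw : G.Adj x w) (hd : G.dist x y = 2) :
    pairDependency G s(x, w) x y =
      if G.Adj w y then (1 : ℚ) / #(G.neighborFinset x ∩ G.neighborFinset y) else 0 := by
  have hxy : x ≠ y := by rintro rfl; simp at hd
  rw [pairDependency, if_neg hxy, numShortestPathsThru_of_dist_eq_two hxw hd,
    numShortestPaths_of_dist_eq_two hd]
  split_ifs <;> simp

theorem pairDependency_eq_zero_of_dist_le_two {e : Sym2 V} (hd : G.dist x y ≤ 2)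
    (hx : x ∉ e) (hy : y ∉ e) : pairDependency G e x y = 0 := by
  have hthru : numShortestPathsThru G x y e = 0 := Nat.card_eq_zero.2 <| .inl
    ⟨fun ⟨p, hp, hep⟩ =>
      (Walk.mem_or_mem_of_mem_edges_of_length_le_two (hp ▸ hd) hep).elim hx hy⟩
  simp [pairDependency, hthru]

theorem sum_pairDependency_mk [Fintype V] [DecidableEq V] [DecidableRel G.Adj] {u : V}
    (hconn : G.Connected) (hecc : ∀ y, G.dist u y ≤ 2) (huw : G.Adj u w) :
    ∑ y, pairDependency G s(u, w) u y =
      1 + ∑ v ∈ (G.neighborFinset w \ G.neighborFinset u).erase u,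
        (1 : ℚ) / #(G.neighborFinset u ∩ G.neighborFinset v) := by
  set A := (G.neighborFinset w \ G.neighborFinset u).erase u
  have hterm (y : V) : pairDependency G s(u, w) u y =
      (if y = w then 1 else 0) +
        if y ∈ A then (1 : ℚ) / #(G.neighborFinset u ∩ G.neighborFinset y) else 0 := by
    by_cases hyu : y = u
    · simp [A, hyu, huw.ne]
    by_cases huy : G.Adj u y
    · simp [A, pairDependency_of_adj huy, huy, huw.ne', eq_comm (a := y)]
    have hd : G.dist u y = 2 :=
      le_antisymm (hecc y) (hconn.one_lt_dist_of_ne_of_not_adj (Ne.symm hyu) huy)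
    have hyw : y ≠ w := by rintro rfl; exact huy huw
    simp [A, pairDependency_mk_of_dist_eq_two huw hd, hyu, huy, hyw]
  simp only [hterm, sum_add_distrib, sum_ite_eq', mem_univ, if_true, sum_ite_mem, univ_inter]

end SimpleGraph

theorem stmt2_general {V : Type*} [Fintype V] [DecidableEq V] (G : SimpleGraph V)
    [DecidableRel G.Adj] (hconn : G.Connected)
    (hdiam : ∀ x y : V, G.dist x y ≤ 2)
    (u w : V) (huw : G.Adj u w) :
    edgeBetweenness G s(u, w) =
      2 + 2 * ∑ v ∈ (G.neighborFinset w \ G.neighborFinset u).erase u,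
              (1 : ℚ) / ((G.neighborFinset u ∩ G.neighborFinset v).card)
        + 2 * ∑ v ∈ (G.neighborFinset u \ G.neighborFinset w).erase w,
              (1 : ℚ) / ((G.neighborFinset w ∩ G.neighborFinset v).card) := by
  have hsupp : ∀ x ∉ ({u, w} : Finset V), ∀ y ∉ ({u, w} : Finset V),
      pairDependency G s(u, w) x y = 0 := fun x hx y hy =>
    pairDependency_eq_zero_of_dist_le_two (hdiam x y) (by simpa [not_or] using hx)
      (by simpa [not_or] using hy)
  have hrow_u := sum_pairDependency_mk hconn (hdiam u) huw
  have hrow_w := Sym2.eq_swap (a := w) ▸ sum_pairDependency_mk hconn (hdiam w) huw.symm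
  have huw_one : pairDependency G s(u, w) u w = 1 := by simp [pairDependency_of_adj huw]
  have hwu_one : pairDependency G s(u, w) w u = 1 := by rw [pairDependency_comm, huw_one]
  rw [edgeBetweenness_eq_sum_pairDependency,
    sum_sum_eq_two_nsmul_sub_of_symm {u, w} (pairDependency_comm _) hsupp]
  simp only [sum_pair huw.ne, hrow_u, hrow_w, huw_one, hwu_one, pairDependency_self]
  ring

theorem stmt2 {V : Type*} [Fintype V] [DecidableEq V] (G : SimpleGraph V)
    [DecidableRel G.Adj] (hconn : G.Connected)
    (hdiam : ∀ x y : V, G.dist x y ≤ 2) (hdiam2 : ∃ x y : V, G.dist x y = 2)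
    (u w : V) (huw : G.Adj u w) :
    edgeBetweenness G s(u, w) =
      2 + 2 * ∑ v ∈ (G.neighborFinset w \ G.neighborFinset u).erase u,
              (1 : ℚ) / ((G.neighborFinset u ∩ G.neighborFinset v).card)
        + 2 * ∑ v ∈ (G.neighborFinset u \ G.neighborFinset w).erase w,
              (1 : ℚ) / ((G.neighborFinset w ∩ G.neighborFinset v).card) :=
  stmt2_general G hconn hdiam u w huw
end

section
/- For k = 18n ± 3 and b = 6n, the circulant C_k(1,b) is not isomorphic to any circulant C_k(1,b') with 1 ≤ b' ≤ k/2 and b' ≠ b. -/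
/-!
Instead of the Nicoloso–Pietropaoli classification, the proof uses one isomorphism invariant:
the dimension of the kernel of the adjacency matrix over `𝔽₂`. Writing `T` for the translation
`φ ↦ φ (· + 1)` of functions `ℤ/k → 𝔽₂`, the adjacency operator of `C_k(1,b)` is
`T + T⁻¹ + T^b + T^(-b) = T^(-b) (T^(b+1) - 1) (T^(b-1) - 1)` in characteristic two. For odd `k`
the kernel of this product of difference operators has dimension `gcd(k,b+1) + gcd(k,b-1) - 1`.
For `k = 3M` with `M = 6n ∓ 1` this is `M` when `b = 6n`, and an elementary divisibility argument
shows that no other `b' ≤ k/2` gives `M` (the cycle `b' = 1` gives `1`).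
-/

open SimpleGraph Finset

open Module LinearMap Function AddSubgroup

namespace Submodule

variable {K V W : Type*} [Field K] [AddCommGroup V] [Module K V] [FiniteDimensional K V]
  [AddCommGroup W] [Module K W]

theorem finrank_map_add_finrank_inf_ker (f : V →ₗ[K] W) (p : Submodule K V) :
    finrank K (p.map f) + finrank K ↥(p ⊓ ker f) = finrank K p := by
  rw [← range_domRestrict, ← finrank_range_add_finrank_ker (f.domRestrict p), ker_domRestrict,
    ← finrank_map_subtype_eq, map_comap_subtype]

theorem finrank_comap (f : V →ₗ[K] W) (q : Submodule K W) :
    finrank K (q.comap f) = finrank K (ker f) + finrank K ↥(range f ⊓ q) := by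
  rw [← finrank_map_add_finrank_inf_ker f, map_comap_eq, add_comm,
    inf_eq_right.mpr f.ker_le_comap]

end Submodule

section DifferenceOperators

variable {K G : Type*} [Field K] [AddCommGroup G]

variable (K) in
def periodicFunctions (H : AddSubgroup G) : Submodule K (G → K) where
  carrier := {φ | ∀ h ∈ H, Periodic φ h}
  add_mem' hφ hψ h hh := (hφ h hh).add (hψ h hh)
  zero_mem' _ _ _ := rfl
  smul_mem' c _ hφ h hh := (hφ h hh).smul c

theorem mem_periodicFunctions {H : AddSubgroup G} {φ : G → K} :
    φ ∈ periodicFunctions K H ↔ ∀ h ∈ H, Periodic φ h := Iff.rfl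

theorem periodicFunctions_eq_range_funLeft (H : AddSubgroup G) :
    periodicFunctions K H = range (funLeft K K (QuotientAddGroup.mk : G → G ⧸ H)) := by
  ext φ
  refine ⟨fun hφ => ⟨Quotient.lift φ fun x y hxy => ?_, rfl⟩, ?_⟩
  · simpa using (hφ _ (QuotientAddGroup.leftRel_apply.mp hxy) x).symm
  · rintro ⟨ψ, rfl⟩ h hh x
    simp [(QuotientAddGroup.eq_zero_iff h).mpr hh]

theorem finrank_periodicFunctions [Finite G] (H : AddSubgroup G) :
    finrank K (periodicFunctions K H) = H.index := by
  have : Fintype (G ⧸ H) := Fintype.ofFinite _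
  rw [periodicFunctions_eq_range_funLeft, finrank_range_of_inj
    (funLeft_injective_of_surjective _ _ _ QuotientAddGroup.mk_surjective),
    finrank_fintype_fun_eq_card, AddSubgroup.index, Nat.card_eq_fintype_card]

theorem periodicFunctions_sup (H₁ H₂ : AddSubgroup G) :
    periodicFunctions K (H₁ ⊔ H₂) = periodicFunctions K H₁ ⊓ periodicFunctions K H₂ := by
  ext φ
  simp only [Submodule.mem_inf, mem_periodicFunctions, AddSubgroup.mem_sup]
  refine ⟨fun hφ => ⟨fun h hh => hφ h ⟨h, hh, 0, H₂.zero_mem, add_zero h⟩,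
    fun h hh => hφ h ⟨0, H₁.zero_mem, h, hh, zero_add h⟩⟩, ?_⟩
  rintro ⟨hφ₁, hφ₂⟩ _ ⟨h₁, hh₁, h₂, hh₂, rfl⟩
  exact (hφ₁ h₁ hh₁).add_period (hφ₂ h₂ hh₂)

theorem finrank_periodicFunctions_inf_ker_sum [Fintype G] (H : AddSubgroup G)
    (hG : (Fintype.card G : K) ≠ 0) :
    finrank K ↥(periodicFunctions K H ⊓ ker (∑ x : G, proj x : (G → K) →ₗ[K] K)) + 1 =
      H.index := by
  set σ : (G → K) →ₗ[K] K := ∑ x : G, proj x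
  have hσ : (periodicFunctions K H).map σ = ⊤ := by
    refine eq_top_iff.mpr fun c _ => ⟨fun _ => c / Fintype.card G, fun _ _ _ => rfl, ?_⟩
    simp [σ, mul_div_cancel₀ c hG]
  rw [← finrank_periodicFunctions (K := K),
    ← Submodule.finrank_map_add_finrank_inf_ker σ (periodicFunctions K H), hσ, finrank_top,
    finrank_self, add_comm]

variable (K) in
def diffOp (c : G) : (G → K) →ₗ[K] (G → K) where
  toFun φ x := φ (x + c) - φ x
  map_add' φ ψ := by ext; simp only [Pi.add_apply]; ring
  map_smul' a φ := by ext; simp only [Pi.smul_apply, smul_eq_mul, RingHom.id_apply]; ring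

@[simp]
theorem diffOp_apply (c : G) (φ : G → K) (x : G) : diffOp K c φ x = φ (x + c) - φ x := rfl

theorem ker_diffOp (c : G) : ker (diffOp K c) = periodicFunctions K (zmultiples c) := by
  ext φ
  simp only [mem_ker, mem_periodicFunctions, AddSubgroup.mem_zmultiples_iff]
  refine ⟨fun hφ => ?_, fun hφ => ?_⟩
  · have hc : Periodic φ c := fun x => sub_eq_zero.mp (congrFun hφ x)
    rintro _ ⟨m, rfl⟩
    exact hc.zsmul m
  · ext x
    simpa [sub_eq_zero] using hφ c ⟨1, one_zsmul c⟩ x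

theorem diffOp_comp_comm (a b : G) :
    diffOp K a ∘ₗ diffOp K b = diffOp K b ∘ₗ diffOp K a := by
  refine LinearMap.ext fun φ => funext fun x => ?_
  simp only [LinearMap.comp_apply, diffOp_apply, add_right_comm x a b]
  ring

theorem sum_diffOp [Fintype G] (c : G) (φ : G → K) : ∑ x, diffOp K c φ x = 0 := by
  rw [← sub_eq_zero.mpr (Fintype.sum_equiv (Equiv.addRight c) _ _ fun _ => rfl)]
  exact Finset.sum_sub_distrib ..

/- `diffOp b` maps `U = ker (diffOp a)` onto a subspace of codimension one in `U`, because on `U`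
its kernel consists of the constants; its image `range (diffOp b) ⊓ U` also lies in the
hyperplane of `U` of functions with sum zero, so both bounds agree. -/
theorem finrank_ker_diffOp_comp_diffOp [Fintype G] {a b : G}
    (hab : zmultiples a ⊔ zmultiples b = ⊤) (hG : (Fintype.card G : K) ≠ 0) :
    finrank K (ker (diffOp K a ∘ₗ diffOp K b)) + 1 =
      (zmultiples a).index + (zmultiples b).index := by
  rw [ker_comp, ker_diffOp a, Submodule.finrank_comap, ker_diffOp b, finrank_periodicFunctions]
  set U := periodicFunctions K (zmultiples a)
  set σ : (G → K) →ₗ[K] K := ∑ x : G, proj x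
  have hmap : finrank K (U.map (diffOp K b)) + 1 = (zmultiples a).index := by
    have := Submodule.finrank_map_add_finrank_inf_ker (diffOp K b) U
    rwa [ker_diffOp, ← periodicFunctions_sup, hab, finrank_periodicFunctions,
      finrank_periodicFunctions, index_top] at this
  have hmap_le : U.map (diffOp K b) ≤ range (diffOp K b) ⊓ U := by
    refine le_inf LinearMap.map_le_range ?_
    rintro _ ⟨φ, hφ, rfl⟩
    have hU : U = ker (diffOp K a) := (ker_diffOp a).symm
    rw [SetLike.mem_coe, hU, mem_ker] at hφ
    rw [hU, mem_ker, ← LinearMap.comp_apply, diffOp_comp_comm, LinearMap.comp_apply, hφ,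
      map_zero]
  have hle_sum : range (diffOp K b) ⊓ U ≤ U ⊓ ker σ := by
    rw [inf_comm]
    refine inf_le_inf_left U ?_
    rintro _ ⟨φ, rfl⟩
    simpa [σ] using sum_diffOp b φ
  have hmid : finrank K ↥(range (diffOp K b) ⊓ U) + 1 = (zmultiples a).index :=
    le_antisymm
      (finrank_periodicFunctions_inf_ker_sum _ hG ▸
        Nat.add_le_add_right (Submodule.finrank_mono hle_sum) 1)
      (hmap ▸ Nat.add_le_add_right (Submodule.finrank_mono hmap_le) 1)
  omega

end DifferenceOperators

namespace ZMod

theorem natCast_ne_zero_of_pos_of_lt {k m : ℕ} (h0 : 0 < m) (hm : m < k) :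
    (m : ZMod k) ≠ 0 := fun h =>
  Nat.not_dvd_of_pos_of_lt h0 hm ((natCast_eq_zero_iff m k).mp h)

theorem natCast_card_ne_zero_of_odd {k : ℕ} [NeZero k] (hk : Odd k) :
    (Fintype.card (ZMod k) : ZMod 2) ≠ 0 := by
  rw [card, Ne, natCast_eq_zero_iff]
  exact hk.not_two_dvd_nat

theorem index_zmultiples_natCast (k c : ℕ) [NeZero k] :
    (zmultiples (c : ZMod k)).index = k.gcd c := by
  have h := (zmultiples (c : ZMod k)).index_mul_card
  rw [Nat.card_zmultiples, addOrderOf_coe c (NeZero.ne k), Nat.card_zmod] at h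
  have hpos : 0 < k / k.gcd c :=
    Nat.div_pos (Nat.gcd_le_left c (NeZero.pos k)) (Nat.gcd_pos_of_pos_left c (NeZero.pos k))
  rw [← Nat.div_div_self (Nat.gcd_dvd_left k c) (NeZero.ne k)]
  exact (Nat.div_eq_of_eq_mul_left hpos h.symm).symm

theorem zmultiples_add_one_sup_zmultiples_sub_one {k : ℕ} (hk : Odd k) (x : ZMod k) :
    zmultiples (x + 1) ⊔ zmultiples (x - 1) = ⊤ := by
  obtain ⟨m, rfl⟩ := hk
  set S := zmultiples (x + 1) ⊔ zmultiples (x - 1)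
  have h2 : (2 : ZMod (2 * m + 1)) ∈ S := by
    have := S.sub_mem (mem_sup_left (mem_zmultiples (x + 1)))
      (mem_sup_right (mem_zmultiples (x - 1)))
    rwa [add_sub_sub_cancel, one_add_one_eq_two] at this
  have h1 : (1 : ZMod (2 * m + 1)) ∈ S := by
    have h : (m + 1) • (2 : ZMod (2 * m + 1)) = ((2 * m + 1 : ℕ) : ZMod (2 * m + 1)) + 1 := by
      rw [nsmul_eq_mul]; push_cast; ring
    rw [natCast_self, zero_add] at h
    exact h ▸ S.nsmul_mem h2 (m + 1)
  refine eq_top_iff.mpr fun y _ => ?_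
  simpa using S.nsmul_mem h1 y.val

end ZMod

namespace Nat

theorem eq_of_dvd_of_pos_of_lt_two_mul {a b : ℕ} (h : b ∣ a) (ha : 0 < a) (hab : a < 2 * b) :
    a = b := by
  obtain ⟨c, rfl⟩ := h
  have : c < 2 := Nat.lt_of_mul_lt_mul_left (a := b) (by linarith)
  interval_cases c <;> simp_all

theorem coprime_gcd_add_one_gcd_sub_one {k : ℕ} (hk : Odd k) (b : ℕ) :
    (k.gcd (b + 1)).Coprime (k.gcd (b - 1)) := by
  rcases Nat.eq_zero_or_pos b with rfl | hb
  · simp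
  refine eq_one_of_dvd_coprimes (coprime_two_right.mpr hk)
    ((gcd_dvd_left _ _).trans (gcd_dvd_left _ _)) ?_
  have := Nat.dvd_sub ((gcd_dvd_left _ _).trans (gcd_dvd_right k (b + 1)))
    ((gcd_dvd_right _ _).trans (gcd_dvd_right k (b - 1)))
  rwa [show b + 1 - (b - 1) = 2 by omega] at this

theorem coprime_three_mul_of_dist_two {m n : ℕ} (hm : Odd m) (hmn : n = m + 2 ∨ m = n + 2)
    (hn : ¬ 3 ∣ n) : (3 * m).Coprime n := by
  refine Coprime.mul_left ((Prime.coprime_iff_not_dvd prime_three).mpr hn) ?_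
  rcases hmn with rfl | rfl
  · exact coprime_self_add_right.mpr (coprime_two_right.mpr hm)
  · exact (coprime_self_add_right.mpr (coprime_two_right.mpr
      (by simpa [Nat.odd_add] using hm))).symm

theorem eq_one_or_eq_one_of_coprime_of_dvd_three_mul {M d₁ d₂ : ℕ} (hM : Odd M)
    (h₁ : d₁ ∣ 3 * M) (h₂ : d₂ ∣ 3 * M) (hco : d₁.Coprime d₂) (hsum : d₁ + d₂ = M + 1) :
    d₁ = 1 ∨ d₂ = 1 := by
  obtain ⟨t, ht⟩ := hco.mul_dvd_of_dvd_of_dvd h₁ h₂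
  have hodd : Odd (3 * M) := (by decide : Odd 3).mul hM
  obtain ⟨p, rfl⟩ := hodd.of_dvd_nat h₁
  obtain ⟨q, rfl⟩ := hodd.of_dvd_nat h₂
  by_contra! hne
  have hpq : 1 ≤ p * q := one_le_iff_ne_zero.mpr (mul_ne_zero (by omega) (by omega))
  -- `t` is odd; `t ≥ 3` is too large as `d₁ d₂ > d₁ + d₂ - 1 = M`, and `t = 1` fails mod 4
  obtain ⟨s, rfl | rfl⟩ := even_or_odd' t
  · exact hodd.not_two_dvd_nat ⟨(2 * p + 1) * (2 * q + 1) * s, by rw [ht]; ring⟩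
  · rcases eq_zero_or_pos s with rfl | hs
    · have h : 4 * (p * q) = 4 * (p + q) + 2 := by linarith
      omega
    · nlinarith

theorem gcd_add_gcd_eq_succ_iff {M b : ℕ} (hM : Odd M) (hM3 : ¬ 3 ∣ M) (hb : 2 ≤ b)
    (hbM : 2 * b ≤ 3 * M) :
    (3 * M).gcd (b + 1) + (3 * M).gcd (b - 1) = M + 1 ↔ 3 ∣ b ∧ (b = M + 1 ∨ b + 1 = M) := by
  have hodd : Odd (3 * M) := (by decide : Odd 3).mul hM
  constructor
  · intro hsum
    rcases eq_one_or_eq_one_of_coprime_of_dvd_three_mul hM (gcd_dvd_left _ _)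
      (gcd_dvd_left _ _) (coprime_gcd_add_one_gcd_sub_one hodd b) hsum with h | h
    · have hb' : b - 1 = M := eq_of_dvd_of_pos_of_lt_two_mul
        (by simpa [show (3 * M).gcd (b - 1) = M by omega] using gcd_dvd_right (3 * M) (b - 1))
        (by omega) (by omega)
      have : ¬ 3 ∣ b + 1 := fun h3 => by simpa [h] using Nat.dvd_gcd (dvd_mul_right 3 M) h3
      obtain rfl : b = M + 1 := by omega
      omega
    · have hb' : b + 1 = M := eq_of_dvd_of_pos_of_lt_two_mul
        (by simpa [show (3 * M).gcd (b + 1) = M by omega] using gcd_dvd_right (3 * M) (b + 1))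
        (by omega) (by have := odd_iff.mp hM; omega)
      have : ¬ 3 ∣ b - 1 := fun h3 => by simpa [h] using Nat.dvd_gcd (dvd_mul_right 3 M) h3
      obtain rfl : M = b + 1 := by omega
      omega
  · rintro ⟨h3, rfl | rfl⟩
    · rw [(coprime_three_mul_of_dist_two hM (Or.inl rfl) (by omega)).gcd_eq_one,
        Nat.add_sub_cancel, gcd_mul_left_left, add_comm]
    · rw [gcd_mul_left_left, (coprime_three_mul_of_dist_two hM (Or.inr (by omega))
        (by omega)).gcd_eq_one]

end Nat

namespace SimpleGraph

open Matrix

variable {K : Type*} [Field K]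

variable (K) in
open Classical in
noncomputable def adjNullity {V : Type*} [Fintype V] (G : SimpleGraph V) : ℕ :=
  finrank K (ker (G.adjMatrix K).mulVecLin)

theorem adjNullity_eq_finrank_ker {V : Type*} [Fintype V] (G : SimpleGraph V)
    [DecidableRel G.Adj] : G.adjNullity K = finrank K (ker (G.adjMatrix K).mulVecLin) := by
  unfold adjNullity
  convert rfl

theorem Iso.adjNullity_eq {V W : Type*} [Fintype V] [Fintype W] {G : SimpleGraph V}
    {G' : SimpleGraph W} (e : G ≃g G') : G.adjNullity K = G'.adjNullity K := by
  classical
  rw [adjNullity_eq_finrank_ker, adjNullity_eq_finrank_ker]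
  have h : (G.adjMatrix K).rank + _ = _ := finrank_range_add_finrank_ker (G.adjMatrix K).mulVecLin
  have h' : (G'.adjMatrix K).rank + _ = _ :=
    finrank_range_add_finrank_ker (G'.adjMatrix K).mulVecLin
  have hrank : (G'.adjMatrix K).rank = (G.adjMatrix K).rank := by
    rw [← e.reindex_adjMatrix K, rank_reindex]
  rw [finrank_fintype_fun_eq_card] at h h'
  have := Fintype.card_congr e.toEquiv
  omega

theorem circulantGraph_adj_iff_sub_mem {G : Type*} [AddGroup G] {s : Set G} (h0 : (0 : G) ∉ s)
    (hneg : ∀ x ∈ s, -x ∈ s) {u v : G} : (circulantGraph s).Adj u v ↔ v - u ∈ s := by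
  rw [circulantGraph_adj]
  refine ⟨fun ⟨_, h⟩ => h.elim (fun h => by simpa using hneg _ h) id, fun h => ⟨?_, Or.inr h⟩⟩
  rintro rfl
  exact h0 (by simpa using h)

theorem mulVec_adjMatrix_circulantGraph {G : Type*} [AddCommGroup G] [Fintype G]
    [DecidableEq G] {t : Finset G} (h0 : (0 : G) ∉ t) (hneg : ∀ x ∈ t, -x ∈ t)
    [DecidableRel (circulantGraph (t : Set G)).Adj] (φ : G → K) :
    (circulantGraph (t : Set G)).adjMatrix K *ᵥ φ = fun v => ∑ x ∈ t, φ (v + x) := by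
  funext v
  have hN : (circulantGraph (t : Set G)).neighborFinset v = t.map (addLeftEmbedding v) := by
    ext u
    rw [mem_neighborFinset, circulantGraph_adj_iff_sub_mem h0 hneg]
    simp only [Finset.mem_map, addLeftEmbedding_apply]
    exact ⟨fun h => ⟨u - v, h, add_sub_cancel v u⟩, by rintro ⟨x, hx, rfl⟩; simpa using hx⟩
  rw [adjMatrix_mulVec_apply, hN, Finset.sum_map]
  rfl

theorem adjNullity_circulantGraph_eq_finrank_ker {G : Type*} [AddCommGroup G] [Fintype G]
    [DecidableEq G] {t : Finset G} (h0 : (0 : G) ∉ t) (hneg : ∀ x ∈ t, -x ∈ t)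
    (L : (G → K) →ₗ[K] (G → K)) (c : G) (hL : ∀ φ v, ∑ x ∈ t, φ (v + x) = L φ (v - c)) :
    (circulantGraph (t : Set G)).adjNullity K = finrank K (ker L) := by
  classical
  have hA : ((circulantGraph (t : Set G)).adjMatrix K).mulVecLin = funLeft K K (· - c) ∘ₗ L :=
    LinearMap.ext fun φ => funext fun v => by
      rw [mulVecLin_apply, mulVec_adjMatrix_circulantGraph h0 hneg]
      exact hL φ v
  rw [adjNullity_eq_finrank_ker, hA, ker_comp_of_ker_eq_bot _ (ker_eq_bot.mpr
    (funLeft_injective_of_surjective _ _ _ (Equiv.subRight c).surjective))]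

theorem adjNullity_circulantGraph_one_natCast {k b : ℕ} [NeZero k] (hk : Odd k) (hb : 2 ≤ b)
    (hbk : 2 * b < k) :
    (circulantGraph ({1, -1, (b : ZMod k), -(b : ZMod k)} : Set (ZMod k))).adjNullity (ZMod 2)
      + 1 = k.gcd (b + 1) + k.gcd (b - 1) := by
  set x : ZMod k := (b : ZMod k)
  have hxp : x + 1 = ((b + 1 : ℕ) : ZMod k) := by push_cast; rfl
  have hxm : x - 1 = ((b - 1 : ℕ) : ZMod k) := by rw [Nat.cast_sub (by omega), Nat.cast_one]
  have h1 : (1 : ZMod k) ≠ 0 := by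
    simpa using ZMod.natCast_ne_zero_of_pos_of_lt (k := k) one_pos (by omega)
  have h2 : (2 : ZMod k) ≠ 0 := by
    simpa using ZMod.natCast_ne_zero_of_pos_of_lt (k := k) two_pos (by omega)
  have hx : x ≠ 0 := ZMod.natCast_ne_zero_of_pos_of_lt (by omega) (by omega)
  have hxp0 : x + 1 ≠ 0 := hxp ▸ ZMod.natCast_ne_zero_of_pos_of_lt (by omega) (by omega)
  have hxm0 : x - 1 ≠ 0 := hxm ▸ ZMod.natCast_ne_zero_of_pos_of_lt (by omega) (by omega)
  have h2x : 2 * x ≠ 0 := by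
    simpa using ZMod.natCast_ne_zero_of_pos_of_lt (k := k) (m := 2 * b) (by omega) (by omega)
  have h0 : (0 : ZMod k) ∉ ({1, -1, x, -x} : Finset (ZMod k)) := by
    simp only [Finset.mem_insert, Finset.mem_singleton, zero_eq_neg, not_or]
    exact ⟨h1.symm, h1, hx.symm, hx⟩
  have h1t : (1 : ZMod k) ∉ ({-1, x, -x} : Finset (ZMod k)) := by
    simp only [Finset.mem_insert, Finset.mem_singleton, not_or]
    exact ⟨fun h => h2 (by linear_combination h), fun h => hxm0 (by linear_combination -h),
      fun h => hxp0 (by linear_combination h)⟩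
  have h1t' : (-1 : ZMod k) ∉ ({x, -x} : Finset (ZMod k)) := by
    simp only [Finset.mem_insert, Finset.mem_singleton, not_or]
    exact ⟨fun h => hxp0 (by linear_combination -h), fun h => hxm0 (by linear_combination h)⟩
  have hxt : x ∉ ({-x} : Finset (ZMod k)) := by
    simpa only [Finset.mem_singleton] using fun h => h2x (by linear_combination h)
  have hL : ∀ (φ : ZMod k → ZMod 2) v, ∑ y ∈ ({1, -1, x, -x} : Finset (ZMod k)), φ (v + y) =
      (diffOp (ZMod 2) (x + 1) ∘ₗ diffOp (ZMod 2) (x - 1)) φ (v - x) := fun φ v => by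
    rw [Finset.sum_insert h1t, Finset.sum_insert h1t', Finset.sum_insert hxt,
      Finset.sum_singleton]
    simp only [LinearMap.comp_apply, diffOp_apply, CharTwo.sub_eq_add]
    rw [show v - x + (x + 1) + (x - 1) = v + x by ring, show v - x + (x + 1) = v + 1 by ring,
      show v - x + (x - 1) = v + -1 by ring, show v - x = v + -x by ring]
    ring
  classical
  rw [show ({1, -1, x, -x} : Set (ZMod k)) = ↑({1, -1, x, -x} : Finset (ZMod k)) by simp,
    adjNullity_circulantGraph_eq_finrank_ker h0 (by simp) _ x hL,
    finrank_ker_diffOp_comp_diffOp (ZMod.zmultiples_add_one_sup_zmultiples_sub_one hk x)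
      (ZMod.natCast_card_ne_zero_of_odd hk),
    hxp, hxm, ZMod.index_zmultiples_natCast, ZMod.index_zmultiples_natCast]

theorem adjNullity_circulantGraph_one {k : ℕ} [NeZero k] (hk : Odd k) (hk3 : 3 ≤ k) :
    (circulantGraph ({1, -1} : Set (ZMod k))).adjNullity (ZMod 2) = 1 := by
  have h1 : (1 : ZMod k) ≠ 0 := by
    simpa using ZMod.natCast_ne_zero_of_pos_of_lt (k := k) one_pos (by omega)
  have h2 : (2 : ZMod k) ≠ 0 := by
    simpa using ZMod.natCast_ne_zero_of_pos_of_lt (k := k) two_pos (by omega)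
  have h0 : (0 : ZMod k) ∉ ({1, -1} : Finset (ZMod k)) := by
    simp only [Finset.mem_insert, Finset.mem_singleton, zero_eq_neg, not_or]
    exact ⟨h1.symm, h1⟩
  have h1t : (1 : ZMod k) ∉ ({-1} : Finset (ZMod k)) := by
    simpa only [Finset.mem_singleton] using fun h => h2 (by linear_combination h)
  have hL : ∀ (φ : ZMod k → ZMod 2) v, ∑ y ∈ ({1, -1} : Finset (ZMod k)), φ (v + y) =
      diffOp (ZMod 2) 2 φ (v - 1) := fun φ v => by
    rw [Finset.sum_insert h1t, Finset.sum_singleton, diffOp_apply, CharTwo.sub_eq_add,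
      show v - 1 + 2 = v + 1 by ring, sub_eq_add_neg]
  classical
  rw [show ({1, -1} : Set (ZMod k)) = ↑({1, -1} : Finset (ZMod k)) by simp,
    adjNullity_circulantGraph_eq_finrank_ker h0 (by simp) _ 1 hL, ker_diffOp,
    finrank_periodicFunctions, show (2 : ZMod k) = ((2 : ℕ) : ZMod k) by simp,
    ZMod.index_zmultiples_natCast, Nat.Coprime.gcd_eq_one (Nat.coprime_two_right.mpr hk)]

end SimpleGraph

theorem stmt14 (n : ℕ) (hn : 1 ≤ n) (k : ℕ) (hk : k = 18 * n - 3 ∨ k = 18 * n + 3)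
    (b' : ℕ) (hb'1 : 1 ≤ b') (hb'2 : 2 * b' ≤ k) (hb'ne : b' ≠ 6 * n) :
    IsEmpty
      ((circulantGraph ({1, -1, (6 * n : ZMod k), -(6 * n : ZMod k)} : Set (ZMod k))) ≃g
        (circulantGraph ({1, -1, (b' : ZMod k), -(b' : ZMod k)} : Set (ZMod k)))) := by
  obtain ⟨M, rfl, hM⟩ : ∃ M, k = 3 * M ∧ (M = 6 * n - 1 ∨ M = 6 * n + 1) := by
    rcases hk with rfl | rfl
    exacts [⟨6 * n - 1, by omega, Or.inl rfl⟩, ⟨6 * n + 1, by omega, Or.inr rfl⟩]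
  have : NeZero (3 * M) := ⟨by omega⟩
  have hMo : Odd M := Nat.odd_iff.mpr (by omega)
  have hodd : Odd (3 * M) := Nat.odd_iff.mpr (by omega)
  have hM3 : ¬ 3 ∣ M := by omega
  refine ⟨fun e => ?_⟩
  have hnull := e.adjNullity_eq (K := ZMod 2)
  have h6n := adjNullity_circulantGraph_one_natCast (b := 6 * n) hodd (by omega) (by omega)
  rw [(Nat.gcd_add_gcd_eq_succ_iff hMo hM3 (by omega) (by omega)).mpr ⟨by omega, by omega⟩]
    at h6n
  push_cast at h6n
  rcases (show b' = 1 ∨ 2 ≤ b' by omega) with rfl | hb'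
  · rw [show ({1, -1, ((1 : ℕ) : ZMod (3 * M)), -((1 : ℕ) : ZMod (3 * M))} : Set (ZMod (3 * M)))
      = {1, -1} by simp, adjNullity_circulantGraph_one hodd (by omega)] at hnull
    omega
  · have h' := adjNullity_circulantGraph_one_natCast hodd hb' (by omega)
    have := (Nat.gcd_add_gcd_eq_succ_iff hMo hM3 hb' hb'2).mp (by omega)
    omega
end

section
/- The circulant graph C_{18n±3}(1, 6n) is not edge-transitive for any positive integer n. -/
/-!
Call two edges *opposite* when they are opposite sides of a 4-cycle. Automorphisms preserve
this relation, hence map the classes of the equivalence relation it generates bijectively onto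
each other.

In `C_k(1, b)` with `b = 6n`, no relation `c₁ + c₂ b = 0` with `|c₁| + |c₂| ≤ 4` holds
(unlike `3b = ±3`, which has length 6), so every 4-cycle is a square
`x, x + s, x + s + t, x + t` with `s = ±1`, `t = ±b`, or vice versa. Translating the edge `{0, b}`
by `1` repeatedly shows that its class contains all `k` edges `{y, y + b}`, while the class of
`{0, 1}` only contains edges `{x, x + 1}` with `x` a multiple of `b`, i.e. fewer than `k` edges
since `3 ∣ b` and `3 ∣ k`. So no automorphism maps `{0, 1}` to `{0, b}`.
-/

open SimpleGraph Finset

open Relation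

namespace SimpleGraph

variable {V W : Type*}

def IsOpposite (G : SimpleGraph V) (e e' : Sym2 V) : Prop :=
  ∃ p q r w : V, e = s(p, q) ∧ e' = s(r, w) ∧
    G.Adj p q ∧ G.Adj q r ∧ G.Adj r w ∧ G.Adj w p ∧ p ≠ r ∧ q ≠ w

def oppositeClass (G : SimpleGraph V) (e : Sym2 V) : Set (Sym2 V) :=
  {e' | ReflTransGen G.IsOpposite e e'}

variable {G : SimpleGraph V} {H : SimpleGraph W}

theorem IsOpposite.map (φ : G ↪g H) {e e' : Sym2 V} (h : G.IsOpposite e e') :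
    H.IsOpposite (e.map φ) (e'.map φ) := by
  obtain ⟨p, q, r, w, rfl, rfl, hpq, hqr, hrw, hwp, hpr, hqw⟩ := h
  exact ⟨φ p, φ q, φ r, φ w, rfl, rfl, φ.map_adj_iff.2 hpq, φ.map_adj_iff.2 hqr,
    φ.map_adj_iff.2 hrw, φ.map_adj_iff.2 hwp, φ.injective.ne hpr, φ.injective.ne hqw⟩

theorem image_oppositeClass_subset (φ : G ↪g H) (e : Sym2 V) :
    Sym2.map φ '' G.oppositeClass e ⊆ H.oppositeClass (e.map φ) := by
  rintro _ ⟨e', he', rfl⟩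
  exact ReflTransGen.lift _ (fun _ _ h ↦ IsOpposite.map φ h) _ _ he'

theorem ncard_oppositeClass_le [Finite W] (φ : G ↪g H) (e : Sym2 V) :
    (G.oppositeClass e).ncard ≤ (H.oppositeClass (e.map φ)).ncard := by
  rw [← Set.ncard_image_of_injective _ (Sym2.map.injective φ.injective)]
  exact Set.ncard_le_ncard (image_oppositeClass_subset φ e)

theorem circulantGraph_adj_add {A : Type*} [AddCommGroup A] {s : Set A} {d : A}
    (hd : d ∈ s) (hd₀ : d ≠ 0) (u : A) : (circulantGraph s).Adj u (u + d) := by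
  rw [circulantGraph_adj]
  exact ⟨by simpa [eq_comm] using hd₀, Or.inr (by simpa using hd)⟩

end SimpleGraph

section Circulant

variable {A : Type*} [AddCommGroup A] {a b : A}

def latticeHom (a b : A) : ℤ × ℤ →+ A :=
  (zmultiplesHom A a).coprod (zmultiplesHom A b)

theorem latticeHom_apply (v : ℤ × ℤ) : latticeHom a b v = v.1 • a + v.2 • b := by
  simp [latticeHom]

def unitVec : Fin 4 → ℤ × ℤ := ![(1, 0), (-1, 0), (0, 1), (0, -1)]

theorem unitVec_square : ∀ i j l m : Fin 4, (unitVec i).2 = 0 →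
    unitVec i + unitVec j + unitVec l + unitVec m = 0 →
    unitVec i + unitVec j ≠ 0 → unitVec j + unitVec l ≠ 0 →
    unitVec l = -unitVec i ∧ (unitVec j).1 = 0 := by
  decide

theorem abs_add_abs_sum_unitVec_le : ∀ i j l m : Fin 4,
    |(unitVec i + unitVec j + unitVec l + unitVec m).1| +
      |(unitVec i + unitVec j + unitVec l + unitVec m).2| ≤ 4 := by
  decide

def NoShortRelation (a b : A) : Prop :=
  ∀ c₁ c₂ : ℤ, |c₁| + |c₂| ≤ 4 → c₁ • a + c₂ • b = 0 → c₁ = 0 ∧ c₂ = 0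

theorem NoShortRelation.smul_add_smul_ne_zero (h : NoShortRelation a b) (c₁ c₂ : ℤ)
    (hc : |c₁| + |c₂| ≤ 4) (h₀ : c₁ ≠ 0 ∨ c₂ ≠ 0) : c₁ • a + c₂ • b ≠ 0 := by
  intro h'
  have := h c₁ c₂ hc h'
  tauto

theorem exists_unitVec_of_adj {u v : A} (h : (circulantGraph {a, -a, b, -b}).Adj u v) :
    ∃ i, v = u + latticeHom a b (unitVec i) := by
  have hvu : v - u ∈ ({a, -a, b, -b} : Set A) := by
    rw [circulantGraph_adj] at h
    rcases h.2 with h | h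
    · rw [← neg_sub]
      simp only [Set.mem_insert_iff, Set.mem_singleton_iff] at h ⊢
      rcases h with h | h | h | h <;> simp [h]
    · exact h
  simp only [Set.mem_insert_iff, Set.mem_singleton_iff] at hvu
  rcases hvu with h | h | h | h <;> simp [Fin.exists_fin_succ, unitVec, latticeHom_apply, ← h]

theorem NoShortRelation.square (h : NoShortRelation a b) {i j l m : Fin 4}
    (hi : (unitVec i).2 = 0)
    (hsum : latticeHom a b (unitVec i) + latticeHom a b (unitVec j) +
      latticeHom a b (unitVec l) + latticeHom a b (unitVec m) = 0)
    (hij : latticeHom a b (unitVec i) + latticeHom a b (unitVec j) ≠ 0)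
    (hjl : latticeHom a b (unitVec j) + latticeHom a b (unitVec l) ≠ 0) :
    latticeHom a b (unitVec l) = -latticeHom a b (unitVec i) ∧
      latticeHom a b (unitVec j) ∈ AddSubgroup.zmultiples b := by
  simp only [← map_add] at hsum hij hjl
  have hsum' : unitVec i + unitVec j + unitVec l + unitVec m = 0 := by
    rw [latticeHom_apply] at hsum
    obtain ⟨h₁, h₂⟩ := h _ _ (abs_add_abs_sum_unitVec_le i j l m) hsum
    exact Prod.ext h₁ h₂
  obtain ⟨hl, hj⟩ := unitVec_square i j l m hi hsum'
    (fun h₀ ↦ hij (by rw [h₀, map_zero])) (fun h₀ ↦ hjl (by rw [h₀, map_zero]))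
  refine ⟨by rw [hl, map_neg], ?_⟩
  rw [latticeHom_apply, hj, zero_smul, zero_add]
  exact zsmul_mem (AddSubgroup.mem_zmultiples b) _

theorem NoShortRelation.adj_add_left (h : NoShortRelation a b) (x : A) :
    (circulantGraph {a, -a, b, -b}).Adj x (x + a) :=
  circulantGraph_adj_add (by simp) (by
    simpa using h.smul_add_smul_ne_zero 1 0 (by norm_num) (by norm_num)) x

theorem NoShortRelation.adj_add_right (h : NoShortRelation a b) (x : A) :
    (circulantGraph {a, -a, b, -b}).Adj x (x + b) :=
  circulantGraph_adj_add (by simp) (by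
    simpa using h.smul_add_smul_ne_zero 0 1 (by norm_num) (by norm_num)) x

theorem NoShortRelation.isOpposite_translate (h : NoShortRelation a b) (x : A) :
    (circulantGraph {a, -a, b, -b}).IsOpposite s(x, x + b) s(x + a, x + a + b) := by
  refine ⟨x, x + b, x + b + a, x + a, rfl, by rw [Sym2.eq_swap, add_right_comm],
    h.adj_add_right x, h.adj_add_left _, ?_, (h.adj_add_left x).symm, ?_, ?_⟩
  · rw [add_right_comm]
    exact (h.adj_add_right _).symm
  · simpa [add_assoc, add_comm b a] using
      h.smul_add_smul_ne_zero 1 1 (by norm_num) (by norm_num)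
  · simpa [neg_add_eq_zero, eq_comm] using
      h.smul_add_smul_ne_zero (-1) 1 (by norm_num) (by norm_num)

theorem NoShortRelation.isOpposite_add_left (h : NoShortRelation a b) {x : A} {e : Sym2 A}
    (he : (circulantGraph {a, -a, b, -b}).IsOpposite s(x, x + a) e) :
    ∃ t ∈ AddSubgroup.zmultiples b, e = s(x, x + a).map (· + t) := by
  obtain ⟨p, q, r, w, hpq, rfl, -, hqr, hrw, hwp, hpr, hqw⟩ := he
  obtain ⟨i, hi, rfl⟩ : ∃ i, (unitVec i).2 = 0 ∧ q = p + latticeHom a b (unitVec i) := by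
    rcases Sym2.eq_iff.1 hpq with ⟨rfl, rfl⟩ | ⟨rfl, rfl⟩
    · exact ⟨0, rfl, by simp [unitVec, latticeHom_apply]⟩
    · exact ⟨1, rfl, by simp [unitVec, latticeHom_apply]⟩
  obtain ⟨j, rfl⟩ := exists_unitVec_of_adj hqr
  obtain ⟨l, rfl⟩ := exists_unitVec_of_adj hrw
  obtain ⟨m, hm⟩ := exists_unitVec_of_adj hwp
  obtain ⟨hl, hj⟩ := h.square hi (by simpa [add_assoc] using hm.symm)
    (by simpa [add_assoc] using hpr) (by simpa [add_assoc] using hqw)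
  refine ⟨_, hj, ?_⟩
  rw [hpq, Sym2.map_mk, hl, Sym2.eq_swap]
  congr 1
  abel

theorem NoShortRelation.nsmul_mem_oppositeClass (h : NoShortRelation a b) (m : ℕ) :
    s(m • a, m • a + b) ∈ (circulantGraph {a, -a, b, -b}).oppositeClass s(0, b) := by
  induction m with
  | zero =>
    rw [zero_smul, zero_add]
    exact ReflTransGen.refl
  | succ m ih =>
    rw [succ_nsmul]
    exact ih.tail (h.isOpposite_translate _)

theorem NoShortRelation.oppositeClass_subset (h : NoShortRelation a b) :
    (circulantGraph {a, -a, b, -b}).oppositeClass s(0, a) ⊆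
      (fun y ↦ s(y, y + a)) '' AddSubgroup.zmultiples b := by
  intro e he
  induction he with
  | refl => exact ⟨0, zero_mem _, by simp⟩
  | tail _ hop ih =>
    obtain ⟨y, hy, rfl⟩ := ih
    obtain ⟨t, ht, rfl⟩ := h.isOpposite_add_left hop
    exact ⟨y + t, add_mem hy ht, by simp [add_right_comm]⟩

end Circulant

theorem Int.eq_zero_or_eq_or_eq_neg_of_dvd_of_abs_lt {k m : ℤ} (h : k ∣ m) (hm : |m| < 2 * k) :
    m = 0 ∨ m = k ∨ m = -k := by
  obtain ⟨t, rfl⟩ := h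
  have hk : 0 < k := by linarith [abs_nonneg (k * t)]
  rw [abs_mul, abs_of_pos hk] at hm
  obtain ⟨ht₁, ht₂⟩ := abs_lt.1 (lt_of_mul_lt_mul_left (by linarith : k * |t| < k * 2) hk.le)
  interval_cases t <;> simp

section ZMod

variable {k : ℕ}

theorem noShortRelation_one_six_mul {n : ℕ} (hn : 1 ≤ n) (hk : k = 18 * n - 3 ∨ k = 18 * n + 3) :
    NoShortRelation (1 : ZMod k) (6 * n) := by
  intro c₁ c₂ hc hrel
  have hdvd : (k : ℤ) ∣ c₁ + c₂ * (6 * n) := by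
    rw [← ZMod.intCast_zmod_eq_zero_iff_dvd]
    push_cast
    simpa [zsmul_eq_mul] using hrel
  rw [abs_eq_max_neg, abs_eq_max_neg] at hc
  obtain ⟨h₂l, h₂u⟩ : -4 ≤ c₂ ∧ c₂ ≤ 4 := by omega
  interval_cases c₂ <;>
    rcases Int.eq_zero_or_eq_or_eq_neg_of_dvd_of_abs_lt hdvd (abs_lt.2 ⟨by omega, by omega⟩)
      with h | h | h <;>
    omega

theorem one_notMem_zmultiples_six_mul (hk : 3 ∣ k) (n : ℕ) :
    (1 : ZMod k) ∉ AddSubgroup.zmultiples (6 * n : ZMod k) := by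
  rw [AddSubgroup.mem_zmultiples_iff]
  rintro ⟨m, hm⟩
  have h₃ := congrArg (ZMod.castHom hk (ZMod 3)) hm
  rw [map_zsmul, map_mul, map_ofNat, map_natCast, map_one,
    show (6 : ZMod 3) = 0 by decide, zero_mul, smul_zero] at h₃
  exact zero_ne_one h₃

variable [NeZero k] {b : ZMod k}

theorem NoShortRelation.card_le_ncard_oppositeClass (h : NoShortRelation (1 : ZMod k) b) :
    k ≤ ((circulantGraph {1, -1, b, -b}).oppositeClass s(0, b)).ncard := by
  have hinj : Function.Injective fun y : ZMod k ↦ s(y, y + b) := by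
    intro y y' hyy
    rcases Sym2.eq_iff.1 hyy with ⟨hy, -⟩ | ⟨hy, hy'⟩
    · exact hy
    · refine absurd ?_ (h.smul_add_smul_ne_zero 0 2 (by norm_num) (by norm_num))
      rw [hy] at hy'
      rw [zero_smul, zero_add, two_smul]
      simpa [add_assoc] using hy'
  calc k = (Set.range fun y : ZMod k ↦ s(y, y + b)).ncard := by
        rw [Set.ncard_range_of_injective hinj, Nat.card_zmod]
    _ ≤ _ := Set.ncard_le_ncard (by
        rintro _ ⟨y, rfl⟩
        simpa using h.nsmul_mem_oppositeClass y.val)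

theorem NoShortRelation.ncard_oppositeClass_lt (h : NoShortRelation (1 : ZMod k) b)
    (hb : (1 : ZMod k) ∉ AddSubgroup.zmultiples b) :
    ((circulantGraph {1, -1, b, -b}).oppositeClass s(0, 1)).ncard < k :=
  calc _ ≤ ((fun y ↦ s(y, y + 1)) '' (AddSubgroup.zmultiples b : Set (ZMod k))).ncard :=
        Set.ncard_le_ncard h.oppositeClass_subset
    _ ≤ (AddSubgroup.zmultiples b : Set (ZMod k)).ncard := Set.ncard_image_le (Set.toFinite _)
    _ < Nat.card (ZMod k) := Set.ncard_lt_card fun h' ↦ hb (Set.eq_univ_iff_forall.1 h' 1)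
    _ = k := Nat.card_zmod k

end ZMod

theorem stmt15 (n : ℕ) (hn : 1 ≤ n) (k : ℕ) (hk : k = 18 * n - 3 ∨ k = 18 * n + 3) :
    ¬ (∀ e₁ ∈ (circulantGraph ({1, -1, (6 * n : ZMod k), -(6 * n : ZMod k)} :
          Set (ZMod k))).edgeSet,
       ∀ e₂ ∈ (circulantGraph ({1, -1, (6 * n : ZMod k), -(6 * n : ZMod k)} :
          Set (ZMod k))).edgeSet,
       ∃ φ : (circulantGraph ({1, -1, (6 * n : ZMod k), -(6 * n : ZMod k)} : Set (ZMod k))) ≃g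
             (circulantGraph ({1, -1, (6 * n : ZMod k), -(6 * n : ZMod k)} : Set (ZMod k))),
         Sym2.map φ e₁ = e₂) := by
  intro hT
  have : NeZero k := ⟨by omega⟩
  have h := noShortRelation_one_six_mul hn hk
  obtain ⟨φ, hφ⟩ := hT s(0, 6 * n) (by simpa using h.adj_add_right 0)
    s(0, 1) (by simpa using h.adj_add_left 0)
  have := calc
    k ≤ _ := h.card_le_ncard_oppositeClass
    _ ≤ _ := hφ ▸ ncard_oppositeClass_le φ.toEmbedding s(0, 6 * n)
    _ < k := h.ncard_oppositeClass_lt (one_notMem_zmultiples_six_mul (by omega) n)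
  exact lt_irrefl k this
end

section
/- Every edge of the circulant graph C_{15}(1,6) has edge betweenness centrality equal to 13; hence C_{15}(1,6) is edge-betweenness-uniform. -/
open SimpleGraph Finset

/-!
Translations `x ↦ x + d` are automorphisms of a circulant graph, and graph isomorphisms preserve
shortest paths and hence edge betweenness. Since `s(0, -d)` is the translate of `s(d, 0)`, every
edge of `C₁₅(1,6)` has the betweenness of `s(0, 1)` or of `s(0, 6)`, and only these two values
have to be computed. For them the kernel enumerates shortest paths as walks of length `dist`: the
distances from `0` are certified by a table, and since every shortest-path count divides `6`, six
times the betweenness is a natural-number sum, which evaluates to `78` for both edges.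
-/

namespace SimpleGraph

variable {V V' : Type*} {G : SimpleGraph V} {G' : SimpleGraph V'}

namespace Iso

def mapWalk (φ : G ≃g G') (u v : V) : G.Walk u v ≃ G'.Walk (φ u) (φ v) where
  toFun p := p.map φ.toHom
  invFun q := (q.map φ.symm.toHom).copy (φ.symm_apply_apply u) (φ.symm_apply_apply v)
  left_inv p := by
    apply Walk.ext_support
    rw [Walk.support_copy, Walk.support_map, Walk.support_map, List.map_map]
    simp
  right_inv q := by
    apply Walk.ext_support
    rw [Walk.support_map, Walk.support_copy, Walk.support_map, List.map_map]
    simp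

variable (φ : G ≃g G')

@[simp]
lemma length_mapWalk {u v : V} (p : G.Walk u v) : (φ.mapWalk u v p).length = p.length :=
  Walk.length_map _ p

lemma mem_edges_mapWalk_iff {u v : V} (p : G.Walk u v) (e : Sym2 V) :
    Sym2.map φ e ∈ (φ.mapWalk u v p).edges ↔ e ∈ p.edges :=
  (Walk.edges_map _ p).symm ▸ List.mem_map_of_injective (Sym2.map.injective φ.injective)

lemma dist_map (u v : V) : G'.dist (φ u) (φ v) = G.dist u v := by
  rw [dist_eq_sInf, dist_eq_sInf, ← EquivLike.range_comp _ (φ.mapWalk u v)]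
  congr 2
  exact funext φ.length_mapWalk

lemma numShortestPaths_map (u v : V) :
    numShortestPaths G' (φ u) (φ v) = numShortestPaths G u v :=
  Nat.card_congr (Equiv.subtypeEquiv (φ.mapWalk u v) fun p => by simp [dist_map]).symm

lemma numShortestPathsThru_map (u v : V) (e : Sym2 V) :
    numShortestPathsThru G' (φ u) (φ v) (Sym2.map φ e) = numShortestPathsThru G u v e :=
  Nat.card_congr (Equiv.subtypeEquiv (φ.mapWalk u v) fun p => by
    simp [dist_map, mem_edges_mapWalk_iff]).symm

lemma edgeBetweenness_map [Fintype V] [Fintype V'] (e : Sym2 V) :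
    edgeBetweenness G' (Sym2.map φ e) = edgeBetweenness G e := by
  refine (Fintype.sum_equiv φ.toEquiv _ _ fun x => Fintype.sum_equiv φ.toEquiv _ _ fun y => ?_).symm
  rw [φ.toEquiv.apply_eq_iff_eq]
  simp [numShortestPaths_map, numShortestPathsThru_map]

end Iso

section LocallyFinite

variable [DecidableEq V] [G.LocallyFinite] {u v : V}

lemma dist_eq_of_finsetWalkLength {n : ℕ} (hn : (G.finsetWalkLength n u v).Nonempty)
    (hlt : ∀ k < n, G.finsetWalkLength k u v = ∅) : G.dist u v = n := by
  obtain ⟨p, hp⟩ := hn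
  rw [mem_finsetWalkLength_iff] at hp
  refine le_antisymm (hp ▸ dist_le p) (not_lt.mp fun h => ?_)
  obtain ⟨q, hq⟩ := p.reachable.exists_walk_length_eq_dist
  simpa [hlt _ h] using mem_finsetWalkLength_iff.mpr hq

lemma numShortestPaths_eq_card (u v : V) :
    numShortestPaths G u v = #(G.finsetWalkLength (G.dist u v) u v) :=
  Nat.subtype_card _ fun _ => mem_finsetWalkLength_iff

lemma numShortestPathsThru_eq_card (u v : V) (e : Sym2 V) :
    numShortestPathsThru G u v e = #{p ∈ G.finsetWalkLength (G.dist u v) u v | e ∈ p.edges} :=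
  Nat.subtype_card _ fun _ => by rw [mem_filter, mem_finsetWalkLength_iff]

end LocallyFinite

section Circulant

variable {α : Type*} [AddGroup α] (s : Set α)

def circulantGraphAddRight (d : α) : circulantGraph s ≃g circulantGraph s where
  toEquiv := Equiv.addRight d
  map_rel_iff' := circulantGraph_adj_translate

@[simp]
lemma circulantGraphAddRight_apply (d x : α) : circulantGraphAddRight s d x = x + d := rfl

lemma dist_circulantGraph (x y : α) :
    (circulantGraph s).dist x y = (circulantGraph s).dist 0 (y - x) := by
  simpa [sub_eq_add_neg] using ((circulantGraphAddRight s (-x)).dist_map x y).symm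

lemma numShortestPaths_circulantGraph (x y : α) :
    numShortestPaths (circulantGraph s) x y = numShortestPaths (circulantGraph s) 0 (y - x) := by
  simpa [sub_eq_add_neg] using ((circulantGraphAddRight s (-x)).numShortestPaths_map x y).symm

lemma exists_eq_map_addRight_of_mem_edgeSet {e : Sym2 α}
    (he : e ∈ (circulantGraph s).edgeSet) : ∃ a, ∃ d ∈ s, e = Sym2.map (· + a) s(0, d) := by
  induction e using Sym2.ind with
  | _ a b =>
    rcases he.2 with h | h
    · exact ⟨b, a - b, h, by simp [Sym2.eq_swap]⟩
    · exact ⟨a, b - a, h, by simp⟩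

variable [Fintype α]

lemma edgeBetweenness_circulantGraph_neg (d : α) :
    edgeBetweenness (circulantGraph s) s(0, -d) = edgeBetweenness (circulantGraph s) s(0, d) := by
  have : s((0 : α), -d) = Sym2.map (circulantGraphAddRight s (-d)) s(0, d) := by
    simp [Sym2.eq_swap]
  rw [this, Iso.edgeBetweenness_map]

lemma edgeBetweenness_circulantGraph_eq_of_forall_mem {c : ℚ}
    (h : ∀ d ∈ s, edgeBetweenness (circulantGraph s) s(0, d) = c) {e : Sym2 α}
    (he : e ∈ (circulantGraph s).edgeSet) : edgeBetweenness (circulantGraph s) e = c := by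
  obtain ⟨a, d, hd, rfl⟩ := exists_eq_map_addRight_of_mem_edgeSet s he
  exact ((circulantGraphAddRight s a).edgeBetweenness_map _).trans (h d hd)

end Circulant

end SimpleGraph

lemma Nat.cast_div_eq_mul_cast_div_div_of_dvd {K : Type*} [Field K] [CharZero K] {a b n : ℕ}
    (hb : b ∣ n) (hn : n ≠ 0) : (a / b : K) = a * ((n / b : ℕ) : K) / n := by
  have hb₀ : (b : K) ≠ 0 := Nat.cast_ne_zero.mpr (ne_zero_of_dvd_ne_zero hn hb)
  rw [Nat.cast_div hb hb₀]
  field_simp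

local notation "C₁₅" => circulantGraph ({1, -1, 6, -6} : Set (ZMod 15))

def distFromZero : ZMod 15 → ℕ := ![0, 1, 2, 2, 3, 2, 1, 2, 2, 1, 2, 3, 2, 2, 1]

lemma dist_C₁₅ (x y : ZMod 15) : dist C₁₅ x y = distFromZero (y - x) := by
  have h : ∀ z, (finsetWalkLength C₁₅ (distFromZero z) 0 z).Nonempty ∧
      ∀ k < distFromZero z, finsetWalkLength C₁₅ k 0 z = ∅ := by
    decide
  rw [dist_circulantGraph]
  exact dist_eq_of_finsetWalkLength (h _).1 (h _).2

lemma numShortestPaths_C₁₅_dvd_six (x y : ZMod 15) : numShortestPaths C₁₅ x y ∣ 6 := by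
  rw [numShortestPaths_circulantGraph, numShortestPaths_eq_card, dist_C₁₅, sub_zero]
  generalize y - x = z
  revert z
  decide

def shortestWalks (x y : ZMod 15) : Finset ((C₁₅).Walk x y) :=
  finsetWalkLength C₁₅ (distFromZero (y - x)) x y

lemma card_shortestWalks (x y : ZMod 15) : #(shortestWalks x y) = numShortestPaths C₁₅ x y := by
  rw [numShortestPaths_eq_card, dist_C₁₅, shortestWalks]

lemma card_filter_shortestWalks (x y : ZMod 15) (e : Sym2 (ZMod 15)) :
    #{p ∈ shortestWalks x y | e ∈ p.edges} = numShortestPathsThru C₁₅ x y e := by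
  rw [numShortestPathsThru_eq_card, dist_C₁₅, shortestWalks]

def sixBetweenness (e : Sym2 (ZMod 15)) : ℕ :=
  ∑ x : ZMod 15, ∑ y : ZMod 15, if x = y then 0 else
    #{p ∈ shortestWalks x y | e ∈ p.edges} * (6 / #(shortestWalks x y))

lemma edgeBetweenness_C₁₅ (e : Sym2 (ZMod 15)) :
    edgeBetweenness C₁₅ e = sixBetweenness e / 6 := by
  rw [edgeBetweenness, sixBetweenness]
  push_cast
  rw [sum_div]
  refine sum_congr rfl fun x _ => ?_
  rw [sum_div]
  refine sum_congr rfl fun y _ => ?_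
  split_ifs
  · simp
  · rw [card_shortestWalks, card_filter_shortestWalks]
    exact Nat.cast_div_eq_mul_cast_div_div_of_dvd (numShortestPaths_C₁₅_dvd_six x y) (by norm_num)

lemma sixBetweenness_one : sixBetweenness s(0, 1) = 78 := by decide

lemma sixBetweenness_six : sixBetweenness s(0, 6) = 78 := by decide

theorem stmt16 :
    (∀ e ∈ (circulantGraph ({1, -1, 6, -6} : Set (ZMod 15))).edgeSet,
      edgeBetweenness (circulantGraph ({1, -1, 6, -6} : Set (ZMod 15))) e = 13) ∧
    (∀ e₁ ∈ (circulantGraph ({1, -1, 6, -6} : Set (ZMod 15))).edgeSet,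
     ∀ e₂ ∈ (circulantGraph ({1, -1, 6, -6} : Set (ZMod 15))).edgeSet,
      edgeBetweenness (circulantGraph ({1, -1, 6, -6} : Set (ZMod 15))) e₁ =
        edgeBetweenness (circulantGraph ({1, -1, 6, -6} : Set (ZMod 15))) e₂) := by
  have h₁ : edgeBetweenness C₁₅ s(0, 1) = 13 := by
    rw [edgeBetweenness_C₁₅, sixBetweenness_one]; norm_num
  have h₆ : edgeBetweenness C₁₅ s(0, 6) = 13 := by
    rw [edgeBetweenness_C₁₅, sixBetweenness_six]; norm_num
  have h : ∀ e ∈ (C₁₅).edgeSet, edgeBetweenness C₁₅ e = 13 := by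
    refine fun e => edgeBetweenness_circulantGraph_eq_of_forall_mem _ ?_
    rintro d (rfl | rfl | rfl | rfl)
    · exact h₁
    · rwa [edgeBetweenness_circulantGraph_neg]
    · exact h₆
    · rwa [edgeBetweenness_circulantGraph_neg]
  exact ⟨h, fun e₁ he₁ e₂ he₂ => by rw [h e₁ he₁, h e₂ he₂]⟩
end
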